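/- Let Q = ν × ν⁺ be the product of the cardinals ν and ν⁺ (ν infinite) ordered componentwise, and let u = (0, ν) ∈ Q. Then Cov(Q \ ↑u) ≥ ν, since Q \ ↑u contains a copy of ν × ν ordered componentwise, and Cov(ν × ν) = ν for ν regular. -/

import Mathlib

/-!
A chain meeting column `a` of `α × β` in a cofinal set of heights cannot reach any column
`a' ≰ a`: a point of column `a` lying above it would be incomparable with it. If fewer than
`cof β` chains cover `α × β`, then every column is cofinally met by one of the chains, and by the
previous remark distinct columns need distinct chains, so at least `#α` chains are needed. For the
square of a regular `ν` this gives `Cov(ν × ν) ≥ ν`; the columns show `Cov(ν × ν) ≤ ν`. Finally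
`ν × ν` sits in `ν × ν⁺` below height `ν`, hence inside `Q \ ↑u`, and chain covers pull back
along order embeddings.
-/

open Cardinal

noncomputable def chainCov {α : Type*} [PartialOrder α] (S : Set α) : Cardinal :=
  sInf {c : Cardinal | ∃ F : Set (Set α),
    (∀ T ∈ F, T ⊆ S ∧ IsChain (· ≤ ·) T) ∧ ⋃₀ F = S ∧ #F = c}

open Set

section ChainCov

variable {α : Type*} [PartialOrder α]

theorem chainCov_le_mk {S : Set α} {F : Set (Set α)}
    (hF : ∀ T ∈ F, T ⊆ S ∧ IsChain (· ≤ ·) T) (hcov : ⋃₀ F = S) : chainCov S ≤ #F :=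
  csInf_le' ⟨F, hF, hcov, rfl⟩

theorem le_chainCov {S : Set α} {c : Cardinal}
    (h : ∀ F : Set (Set α), (∀ T ∈ F, T ⊆ S ∧ IsChain (· ≤ ·) T) → ⋃₀ F = S → c ≤ #F) :
    c ≤ chainCov S := by
  refine le_csInf ⟨_, (fun x => ({x} : Set α)) '' S, ?_, ?_, rfl⟩ ?_
  · rintro _ ⟨x, hx, rfl⟩
    exact ⟨singleton_subset_iff.2 hx, subsingleton_singleton.isChain⟩
  · simp [sUnion_image]
  · rintro _ ⟨F, hF, hcov, rfl⟩
    exact h F hF hcov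

end ChainCov

theorem chainCov_le_of_mapsTo {α β : Type u} [PartialOrder α] [PartialOrder β] (f : α ↪o β)
    {A : Set α} {S : Set β} (h : MapsTo f A S) : chainCov A ≤ chainCov S := by
  refine le_chainCov fun F hF hcov => ?_
  refine (chainCov_le_mk (F := (fun T => A ∩ f ⁻¹' T) '' F) ?_ ?_).trans mk_image_le
  · rintro _ ⟨T, hT, rfl⟩
    exact ⟨inter_subset_left, ((hF T hT).2.preimage_embedding f).mono inter_subset_right⟩
  · rw [sUnion_image, ← inter_iUnion₂, ← preimage_iUnion₂, ← sUnion_eq_biUnion, hcov]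
    exact inter_eq_left.2 h

section Columns

variable {α β : Type u} [PartialOrder α]

theorem chainCov_univ_prod_le [LinearOrder β] : chainCov (univ : Set (α × β)) ≤ #α := by
  refine (chainCov_le_mk (F := range fun a : α => {p : α × β | p.1 = a}) ?_ ?_).trans mk_range_le
  · rintro _ ⟨a, rfl⟩
    refine ⟨subset_univ _, fun p hp q hq _ => ?_⟩
    exact (le_total p.2 q.2).imp (fun h => ⟨(hp.trans hq.symm).le, h⟩)
      (fun h => ⟨(hq.trans hp.symm).le, h⟩)
  · exact eq_univ_of_forall fun p => mem_sUnion.2 ⟨_, ⟨p.1, rfl⟩, rfl⟩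

theorem IsChain.fst_le_of_isCofinal [Preorder β] [NoMaxOrder β] {T : Set (α × β)}
    (hT : IsChain (· ≤ ·) T) {a : α} (hcof : IsCofinal (Prod.mk a ⁻¹' T)) {p : α × β}
    (hp : p ∈ T) : p.1 ≤ a := by
  obtain ⟨c, hc⟩ := exists_gt p.2
  obtain ⟨b, hbT, hcb⟩ := hcof c
  have hpb : p.2 < b := hc.trans_le hcb
  rcases hT hp hbT (fun h => hpb.ne (congrArg Prod.snd h)) with h | h
  · exact h.1
  · exact absurd h.2 hpb.not_ge

theorem mk_le_of_sUnion_eq_univ_prod [LinearOrder β] [NoMaxOrder β] {F : Set (Set (α × β))}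
    (hF : ∀ T ∈ F, IsChain (· ≤ ·) T) (hcov : ⋃₀ F = Set.univ)
    (hlt : #F < Order.cof β) : #α ≤ #F := by
  have : Nonempty β := Order.cof_ne_zero_iff.1 (ne_bot_of_gt hlt)
  have hcol : ∀ a : α, ∃ T : F, IsCofinal (Prod.mk a ⁻¹' T.1) := by
    intro a
    refine isCofinal_of_isCofinal_iUnion ?_ hlt
    rw [← preimage_iUnion, ← sUnion_eq_iUnion, hcov, preimage_univ]
    exact .univ
  choose t ht using hcol
  refine mk_le_of_injective (f := t) fun a a' h => le_antisymm ?_ ?_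
  · obtain ⟨b, hb, -⟩ := ht a Classical.ofNonempty
    exact (hF _ (t a').2).fst_le_of_isCofinal (ht a') (h ▸ hb)
  · obtain ⟨b, hb, -⟩ := ht a' Classical.ofNonempty
    exact (hF _ (t a).2).fst_le_of_isCofinal (ht a) (h ▸ hb)

theorem min_mk_cof_le_chainCov_univ_prod [LinearOrder β] [NoMaxOrder β] :
    min #α (Order.cof β) ≤ chainCov (univ : Set (α × β)) := by
  refine le_chainCov fun F hF hcov => le_of_not_gt fun hlt => ?_
  have := mk_le_of_sUnion_eq_univ_prod (fun T hT => (hF T hT).2) hcov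
    (hlt.trans_le (min_le_right _ _))
  exact ((min_le_left _ _).trans this).not_gt hlt

end Columns

theorem chainCov_univ_ord_toType_prod_self {ν : Cardinal.{u}} (hreg : ν.IsRegular) :
    chainCov (univ : Set (ν.ord.ToType × ν.ord.ToType)) = ν := by
  have : NoMaxOrder ν.ord.ToType := noMaxOrder hreg.aleph0_le
  refine le_antisymm (chainCov_univ_prod_le.trans_eq (mk_ord_toType ν)) ?_
  simpa [Ordinal.cof_toType, hreg.cof_ord] using
    min_mk_cof_le_chainCov_univ_prod (α := ν.ord.ToType) (β := ν.ord.ToType)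

def OrderEmbedding.prodMap {α β γ δ : Type*} [PartialOrder α] [PartialOrder β] [Preorder γ]
    [Preorder δ] (f : α ↪o γ) (g : β ↪o δ) : α × β ↪o γ × δ :=
  .ofMapLEIff (Prod.map f g) fun p q => by simp [Prod.le_def]

namespace Ordinal.ToType

noncomputable def castLE {o o' : Ordinal} (h : o ≤ o') : o.ToType ↪o o'.ToType :=
  .ofMapLEIff (fun x => mk (inclusion (Iio_subset_Iio h) (mk.symm x))) fun _ _ => by
    simp [inclusion]

theorem castLE_lt_mk {o o' : Ordinal} (h : o ≤ o') (x : o.ToType) (ho : o ∈ Iio o') :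
    castLE h x < mk ⟨o, ho⟩ := by
  simp only [castLE, OrderEmbedding.coe_ofMapLEIff, OrderIso.lt_iff_lt, ← Subtype.coe_lt_coe]
  exact (mk.symm x).2

end Ordinal.ToType

theorem cov_prod_minus_up (ν : Cardinal.{u}) (hreg : ν.IsRegular)
    (u : ν.ord.ToType × (Order.succ ν).ord.ToType)
    (hu2 : u.2 = Ordinal.ToType.mk (o := (Order.succ ν).ord)
      ⟨ν.ord, by exact_mod_cast Cardinal.ord_lt_ord.2 (Order.lt_succ ν)⟩) :
    ν ≤ chainCov ((Set.Ici u)ᶜ) ∧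
      (∃ f : ν.ord.ToType × ν.ord.ToType ↪o
          ν.ord.ToType × (Order.succ ν).ord.ToType,
        Set.range f ⊆ (Set.Ici u)ᶜ) ∧
      chainCov (Set.univ : Set (ν.ord.ToType × ν.ord.ToType)) = ν := by
  let f := (OrderIso.refl ν.ord.ToType).toOrderEmbedding.prodMap
    (Ordinal.ToType.castLE (ord_le_ord.2 (Order.le_succ ν)))
  have hf : range f ⊆ (Ici u)ᶜ := by
    rintro _ ⟨p, rfl⟩ hp
    exact (Ordinal.ToType.castLE_lt_mk _ p.2 _).not_ge (hu2 ▸ hp.2)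
  have hsq := chainCov_univ_ord_toType_prod_self hreg
  refine ⟨?_, ⟨f, hf⟩, hsq⟩
  calc ν = chainCov (univ : Set (ν.ord.ToType × ν.ord.ToType)) := hsq.symm
    _ ≤ chainCov (Ici u)ᶜ := chainCov_le_of_mapsTo f fun p _ => hf ⟨p, rfl⟩
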